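/- For 0 < b < 1, q = p/2 + a with p/2 + a > 0, p ≥ 3, and a ≤ p/2 − 2: whenever M(b−1, b+q+1, w) ≥ −((1−b)/(b+2))·M(b, b+q+1, w) holds, the quantity Δ(w) = p/2 − a − 2 + 2(q+1)·M(b−1,b+q+1,w)/M(b,b+q+1,w) − q·M(b−1,b+q,w)/M(b,b+q,w) satisfies Δ(w) ≥ (b(3p+2a) − (8a+12))/(2(b+2)) on the set where M(b−1, b+q, w) < 0. -/

import Mathlib

/-- Kummer's confluent hypergeometric function `M(a, c, w)`. -/
noncomputable def kummerM (a c w : ℝ) : ℝ :=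
  ∑' i : ℕ, ((ascPochhammer ℝ i).eval a / (ascPochhammer ℝ i).eval c) * w ^ i / (Nat.factorial i)

/-- The Beta function as an integral. -/
noncomputable def betaFn (x y : ℝ) : ℝ :=
  ∫ t in (0:ℝ)..1, t ^ (x - 1) * (1 - t) ^ (y - 1)

/-!
Both ratios `M(b-1, c, w) / M(b, c, w)` have positive denominators, since for `0 < b ≤ c` and
`w ≥ 0` the series of `M(b, c, w)` has nonnegative terms, dominated by those of `exp w`, and
constant term `1`. The hypothesis on `M(b-1, b+q+1, w)` then bounds the middle ratio from below,
and on `{M(b-1, b+q, w) < 0}` the last term `-q · M(b-1, b+q, w) / M(b, b+q, w)` is nonnegative,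
so it can be dropped. What remains is the identity
`p/2 - a - 2 - 2(q+1)(1-b)/(b+2) = (b(3p+2a) - (8a+12)) / (2(b+2))`.
-/

open Nat

theorem ascPochhammer_eval_le_eval {S : Type*} [Semiring S] [PartialOrder S]
    [IsStrictOrderedRing S] {a c : S} (ha : 0 < a) (hac : a ≤ c) (n : ℕ) :
    (ascPochhammer S n).eval a ≤ (ascPochhammer S n).eval c := by
  induction n with
  | zero => simp
  | succ n ih =>
    rw [ascPochhammer_succ_eval, ascPochhammer_succ_eval]
    exact mul_le_mul ih (by gcongr) (add_nonneg ha.le n.cast_nonneg)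
      (ascPochhammer_pos n c (ha.trans_le hac)).le

noncomputable def kummerTerm (a c w : ℝ) (i : ℕ) : ℝ :=
  (ascPochhammer ℝ i).eval a / (ascPochhammer ℝ i).eval c * w ^ i / i !

theorem kummerM_eq_tsum (a c w : ℝ) : kummerM a c w = ∑' i, kummerTerm a c w i := rfl

namespace kummerTerm

variable {a c w : ℝ}

theorem apply_zero : kummerTerm a c w 0 = 1 := by
  simp [kummerTerm]

theorem nonneg (ha : 0 < a) (hc : 0 < c) (hw : 0 ≤ w) (i : ℕ) : 0 ≤ kummerTerm a c w i := by
  have := ascPochhammer_pos i a ha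
  have := ascPochhammer_pos i c hc
  unfold kummerTerm
  positivity

theorem le_pow_div_factorial (ha : 0 < a) (hac : a ≤ c) (hw : 0 ≤ w) (i : ℕ) :
    kummerTerm a c w i ≤ w ^ i / i ! := by
  have hratio : (ascPochhammer ℝ i).eval a / (ascPochhammer ℝ i).eval c ≤ 1 :=
    (div_le_one (ascPochhammer_pos i c (ha.trans_le hac))).2 (ascPochhammer_eval_le_eval ha hac i)
  unfold kummerTerm
  gcongr
  exact mul_le_of_le_one_left (by positivity) hratio

theorem summable (ha : 0 < a) (hac : a ≤ c) (hw : 0 ≤ w) : Summable (kummerTerm a c w) :=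
  .of_nonneg_of_le (nonneg ha (ha.trans_le hac) hw) (le_pow_div_factorial ha hac hw)
    (Real.summable_pow_div_factorial w)

end kummerTerm

theorem one_le_kummerM {a c w : ℝ} (ha : 0 < a) (hac : a ≤ c) (hw : 0 ≤ w) :
    1 ≤ kummerM a c w := by
  rw [kummerM_eq_tsum, ← kummerTerm.apply_zero (a := a) (c := c) (w := w)]
  exact (kummerTerm.summable ha hac hw).le_tsum 0
    fun i _ => kummerTerm.nonneg ha (ha.trans_le hac) hw i

theorem kummerM_pos {a c w : ℝ} (ha : 0 < a) (hac : a ≤ c) (hw : 0 ≤ w) : 0 < kummerM a c w :=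
  one_pos.trans_le (one_le_kummerM ha hac hw)

theorem Delta_lower_bound_of_ratio_bounds {p a b r₁ r₀ : ℝ} (hb : 0 < b) (hq : 0 < p / 2 + a)
    (hr₁ : -((1 - b) / (b + 2)) ≤ r₁) (hr₀ : r₀ ≤ 0) :
    (b * (3 * p + 2 * a) - (8 * a + 12)) / (2 * (b + 2))
      ≤ p / 2 - a - 2 + 2 * (p / 2 + a + 1) * r₁ - (p / 2 + a) * r₀ := by
  have hmiddle := mul_le_mul_of_nonneg_left hr₁ (by linarith : 0 ≤ 2 * (p / 2 + a + 1))
  have hlast := mul_nonpos_of_nonneg_of_nonpos hq.le hr₀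
  calc (b * (3 * p + 2 * a) - (8 * a + 12)) / (2 * (b + 2))
      = p / 2 - a - 2 + 2 * (p / 2 + a + 1) * -((1 - b) / (b + 2)) := by
        field_simp
        ring
    _ ≤ p / 2 - a - 2 + 2 * (p / 2 + a + 1) * r₁ - (p / 2 + a) * r₀ := by linarith

theorem Delta_lower_bound_general (p : ℕ) (a b w : ℝ)
    (hb0 : 0 < b) (hq : 0 < (p:ℝ)/2 + a)
    (hw : 0 ≤ w)
    (hratio : kummerM (b - 1) (b + ((p:ℝ)/2 + a) + 1) w ≥
      -((1 - b) / (b + 2)) * kummerM b (b + ((p:ℝ)/2 + a) + 1) w)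
    (hneg : kummerM (b - 1) (b + ((p:ℝ)/2 + a)) w < 0) :
    (p:ℝ)/2 - a - 2
      + 2 * (((p:ℝ)/2 + a) + 1) *
        (kummerM (b - 1) (b + ((p:ℝ)/2 + a) + 1) w / kummerM b (b + ((p:ℝ)/2 + a) + 1) w)
      - ((p:ℝ)/2 + a) *
        (kummerM (b - 1) (b + ((p:ℝ)/2 + a)) w / kummerM b (b + ((p:ℝ)/2 + a)) w)
    ≥ (b * (3*(p:ℝ) + 2*a) - (8*a + 12)) / (2 * (b + 2)) := by
  have hM₁ : 0 < kummerM b (b + ((p:ℝ)/2 + a) + 1) w := kummerM_pos hb0 (by linarith) hw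
  have hM₀ : 0 < kummerM b (b + ((p:ℝ)/2 + a)) w := kummerM_pos hb0 (by linarith) hw
  exact Delta_lower_bound_of_ratio_bounds hb0 hq ((le_div_iff₀ hM₁).2 hratio)
    (div_neg_of_neg_of_pos hneg hM₀).le

theorem Delta_lower_bound (p : ℕ) (a b w : ℝ) (hp : 3 ≤ p)
    (hb0 : 0 < b) (hb1 : b < 1) (hq : 0 < (p:ℝ)/2 + a) (ha : a ≤ (p:ℝ)/2 - 2)
    (hw : 0 ≤ w)
    (hratio : kummerM (b - 1) (b + ((p:ℝ)/2 + a) + 1) w ≥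
      -((1 - b) / (b + 2)) * kummerM b (b + ((p:ℝ)/2 + a) + 1) w)
    (hneg : kummerM (b - 1) (b + ((p:ℝ)/2 + a)) w < 0) :
    (p:ℝ)/2 - a - 2
      + 2 * (((p:ℝ)/2 + a) + 1) *
        (kummerM (b - 1) (b + ((p:ℝ)/2 + a) + 1) w / kummerM b (b + ((p:ℝ)/2 + a) + 1) w)
      - ((p:ℝ)/2 + a) *
        (kummerM (b - 1) (b + ((p:ℝ)/2 + a)) w / kummerM b (b + ((p:ℝ)/2 + a)) w)
    ≥ (b * (3*(p:ℝ) + 2*a) - (8*a + 12)) / (2 * (b + 2)) :=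
  Delta_lower_bound_general p a b w hb0 hq hw hratio hneg
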